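/- In a Hayashi–Samuels space, a function f : X → Y is continuous if and only if it is pre-I-continuous and I-LC-continuous. -/

import Mathlib

open Set

variable {X : Type*}

def LocalFun [TopologicalSpace X] (I : Set (Set X)) (A : Set X) : Set X :=
  {x | ∀ U : Set X, IsOpen U → x ∈ U → U ∩ A ∉ I}

def IsSetIdeal {X : Type*} (I : Set (Set X)) : Prop :=
  ∅ ∈ I ∧ (∀ ⦃A B : Set X⦄, A ∈ I → B ⊆ A → B ∈ I) ∧
    ∀ ⦃A B : Set X⦄, A ∈ I → B ∈ I → A ∪ B ∈ I

/-!
An open set `A` is trivially pre-`I`-open, and it is `A ∩ X` with `X* = X` by the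
Hayashi–Samuels condition. Conversely, if `A = U ∩ W` with `U` open and `W* = W`, then
`A ∪ A* ⊆ W` because `*` is monotone, so pre-`I`-openness gives `A ⊆ U ∩ int W ⊆ U ∩ W = A`,
and `A = U ∩ int W` is open.
-/

section

variable [TopologicalSpace X] {I : Set (Set X)} {A : Set X}

theorem localFun_mono (hI : ∀ ⦃A B : Set X⦄, A ∈ I → B ⊆ A → B ∈ I) {A B : Set X}
    (hAB : A ⊆ B) : LocalFun I A ⊆ LocalFun I B :=
  fun _ hx U hU hxU hUB => hx U hU hxU (hI hUB (inter_subset_inter_right U hAB))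

variable (I A)

def IsPreIOpen : Prop :=
  A ⊆ interior (A ∪ LocalFun I A)

def IsILCSet : Prop :=
  ∃ U W : Set X, IsOpen U ∧ LocalFun I W = W ∧ A = U ∩ W

variable {I A}

theorem IsOpen.isPreIOpen (hA : IsOpen A) : IsPreIOpen I A :=
  hA.subset_interior_iff.mpr subset_union_left

theorem IsOpen.isILCSet (hHS : LocalFun I univ = univ) (hA : IsOpen A) : IsILCSet I A :=
  ⟨A, univ, hA, hHS, (inter_univ A).symm⟩

theorem IsPreIOpen.isOpen_of_isILCSet (hI : ∀ ⦃A B : Set X⦄, A ∈ I → B ⊆ A → B ∈ I)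
    (hpre : IsPreIOpen I A) (hlc : IsILCSet I A) : IsOpen A := by
  obtain ⟨U, W, hU, hW, rfl⟩ := hlc
  have hunion : U ∩ W ∪ LocalFun I (U ∩ W) ⊆ W :=
    union_subset inter_subset_right ((localFun_mono hI inter_subset_right).trans hW.subset)
  have heq : U ∩ W = U ∩ interior W :=
    Subset.antisymm (subset_inter inter_subset_left (hpre.trans (interior_mono hunion)))
      (inter_subset_inter_right U interior_subset)
  exact heq ▸ hU.inter isOpen_interior

theorem isOpen_iff_isPreIOpen_and_isILCSet (hI : ∀ ⦃A B : Set X⦄, A ∈ I → B ⊆ A → B ∈ I)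
    (hHS : LocalFun I univ = univ) : IsOpen A ↔ IsPreIOpen I A ∧ IsILCSet I A :=
  ⟨fun hA => ⟨hA.isPreIOpen, hA.isILCSet hHS⟩, fun ⟨hpre, hlc⟩ => hpre.isOpen_of_isILCSet hI hlc⟩

end

theorem continuous_iff_preICont_and_ILCCont {Y : Type*} [TopologicalSpace X]
    [TopologicalSpace Y] (I : Set (Set X)) (hI : IsSetIdeal I)
    (hHS : LocalFun I (Set.univ : Set X) = Set.univ) (f : X → Y) :
    Continuous f ↔
      ((∀ V : Set Y, IsOpen V →
          f ⁻¹' V ⊆ interior (f ⁻¹' V ∪ LocalFun I (f ⁻¹' V))) ∧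
        (∀ V : Set Y, IsOpen V →
          ∃ U W : Set X, IsOpen U ∧ LocalFun I W = W ∧ f ⁻¹' V = U ∩ W)) := by
  have hpreimage (V : Set Y) :=
    isOpen_iff_isPreIOpen_and_isILCSet (A := f ⁻¹' V) hI.2.1 hHS
  simp only [continuous_def, hpreimage, imp_and, forall_and]
  rfl
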